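/- Let n ≥ q ≥ 1 be integers, let v ∈ ℝⁿ have all entries positive, let X ∈ F_v, and let X⊥ be an n×(n−q) real matrix such that (X X⊥) is orthogonal. Let g : ℝ^{n×q} → ℝ be convex, let ξ ∈ ℝ^{n×q}, let μ > 0, and let Q be the orthogonal projection of ℝ^{n×q} (with the Frobenius inner product) onto the subspace N_X. Let n₀ ∈ N_X and suppose p ∈ ℝ^{n×q} minimizes the function u ↦ (1/2)‖u − (X − μ(ξ − n₀))‖_F² + μ g(u) over ℝ^{n×q}; set w = p − X. Then w minimizes ℓ(η) = ⟨ξ, η⟩ + (1/(2μ))‖η‖_F² + g(X + η) over the affine set {η ∈ ℝ^{n×q} : Qη = Qw}. -/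

import Mathlib

open Matrix

/-! Substituting `u = X + η`, the prox objective `½‖u − (X − μ(ξ − n₀))‖² + μ g(u)` equals
`μ (ℓ(η) − ⟨n₀, η⟩)` plus a constant, so `w = p − X` minimizes `ℓ(η) − ⟨n₀, η⟩` over all `η`.
As `n₀ ∈ N_X` and `Q` is the orthogonal projection onto `N_X`, `⟨n₀, η⟩ = ⟨n₀, Qη⟩` is constant
on `{η : Qη = Qw}`, hence `w` minimizes `ℓ` there. -/

namespace Matrix

variable {m k R : Type*} [Fintype m] [Fintype k] [CommRing R]

theorem trace_transpose_mul_comm (A B : Matrix m k R) : trace (Aᵀ * B) = trace (Bᵀ * A) := by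
  rw [← trace_transpose, transpose_mul, transpose_transpose]

theorem trace_transpose_mul_self_add (A B : Matrix m k R) :
    trace ((A + B)ᵀ * (A + B)) = trace (Aᵀ * A) + 2 * trace (Bᵀ * A) + trace (Bᵀ * B) := by
  rw [transpose_add, Matrix.add_mul, Matrix.mul_add, Matrix.mul_add, trace_add, trace_add,
    trace_add, trace_transpose_mul_comm A B]
  ring

theorem trace_transpose_mul_eq_of_proj_eq {N : Set (Matrix m k R)}
    {Q : Matrix m k R → Matrix m k R} (hQorth : ∀ z, ∀ u ∈ N, trace ((z - Q z)ᵀ * u) = 0)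
    {a y z : Matrix m k R} (ha : a ∈ N) (h : Q y = Q z) : trace (aᵀ * y) = trace (aᵀ * z) := by
  have hy := hQorth y a ha
  have hz := hQorth z a ha
  rw [transpose_sub, Matrix.sub_mul, trace_sub, sub_eq_zero] at hy hz
  rw [trace_transpose_mul_comm a y, trace_transpose_mul_comm a z, hy, hz, h]

end Matrix

section Prox

variable {m k : Type*} [Fintype m] [Fintype k]

theorem prox_objective_add_eq (g : Matrix m k ℝ → ℝ) (x ξ a η : Matrix m k ℝ) {μ : ℝ}
    (hμ : μ ≠ 0) :
    (1 / 2 : ℝ) * trace ((x + η - (x - μ • (ξ - a)))ᵀ * (x + η - (x - μ • (ξ - a)))) +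
        μ * g (x + η) =
      μ * (trace (ξᵀ * η) + 1 / (2 * μ) * trace (ηᵀ * η) + g (x + η) - trace (aᵀ * η)) +
        (1 / 2 : ℝ) * trace ((μ • (ξ - a))ᵀ * (μ • (ξ - a))) := by
  rw [show x + η - (x - μ • (ξ - a)) = η + μ • (ξ - a) by abel, trace_transpose_mul_self_add,
    transpose_smul, Matrix.smul_mul, trace_smul, transpose_sub, Matrix.sub_mul, trace_sub,
    smul_eq_mul]
  field_simp
  ring

theorem prox_minimizer_le_of_trace_eq (g : Matrix m k ℝ → ℝ) (x ξ a p : Matrix m k ℝ) {μ : ℝ}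
    (hμ : 0 < μ)
    (hp : ∀ u : Matrix m k ℝ,
      (1 / 2 : ℝ) * trace ((p - (x - μ • (ξ - a)))ᵀ * (p - (x - μ • (ξ - a)))) + μ * g p ≤
        (1 / 2 : ℝ) * trace ((u - (x - μ • (ξ - a)))ᵀ * (u - (x - μ • (ξ - a)))) + μ * g u)
    {η : Matrix m k ℝ} (hη : trace (aᵀ * η) = trace (aᵀ * (p - x))) :
    trace (ξᵀ * (p - x)) + 1 / (2 * μ) * trace ((p - x)ᵀ * (p - x)) + g (x + (p - x)) ≤
      trace (ξᵀ * η) + 1 / (2 * μ) * trace (ηᵀ * η) + g (x + η) := by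
  have hpη := hp (x + η)
  have hpx := prox_objective_add_eq g x ξ a (p - x) hμ.ne'
  rw [add_sub_cancel] at hpx ⊢
  rw [hpx, prox_objective_add_eq g x ξ a η hμ.ne', add_le_add_iff_right,
    mul_le_mul_iff_right₀ hμ, hη] at hpη
  linarith

end Prox

theorem stmt_12_general (n q : ℕ)
    (X : Matrix (Fin n) (Fin q) ℝ)
    (Nset : Set (Matrix (Fin n) (Fin q) ℝ))
    (g : Matrix (Fin n) (Fin q) ℝ → ℝ)
    (ξ : Matrix (Fin n) (Fin q) ℝ) (μ : ℝ) (hμ : 0 < μ)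
    (Q : Matrix (Fin n) (Fin q) ℝ →ₗ[ℝ] Matrix (Fin n) (Fin q) ℝ)
    (hQorth : ∀ z, ∀ u ∈ Nset, Matrix.trace ((z - Q z)ᵀ * u) = 0)
    (n₀ : Matrix (Fin n) (Fin q) ℝ) (hn₀ : n₀ ∈ Nset)
    (p : Matrix (Fin n) (Fin q) ℝ)
    (hp : ∀ u : Matrix (Fin n) (Fin q) ℝ,
      (1 / 2 : ℝ) * Matrix.trace ((p - (X - μ • (ξ - n₀)))ᵀ * (p - (X - μ • (ξ - n₀)))) +
          μ * g p ≤
        (1 / 2 : ℝ) * Matrix.trace ((u - (X - μ • (ξ - n₀)))ᵀ * (u - (X - μ • (ξ - n₀)))) +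
          μ * g u)
    (w : Matrix (Fin n) (Fin q) ℝ) (hw : w = p - X)
    (l : Matrix (Fin n) (Fin q) ℝ → ℝ)
    (hl : l = fun η => Matrix.trace (ξᵀ * η) +
      (1 / (2 * μ)) * Matrix.trace (ηᵀ * η) + g (X + η)) :
    ∀ η : Matrix (Fin n) (Fin q) ℝ, Q η = Q w → l w ≤ l η := by
  intro η hη
  subst hl hw
  exact prox_minimizer_le_of_trace_eq g X ξ n₀ p hμ hp
    (trace_transpose_mul_eq_of_proj_eq hQorth hn₀ hη)

/-- Let `Q` be the Frobenius-orthogonal projection onto the subspace `N_X`,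
let `n₀ ∈ N_X`, and let `p` minimize `u ↦ (1/2)‖u − (X − μ(ξ − n₀))‖_F² + μ g(u)` over
`ℝ^{n×q}`; set `w = p − X`. Then `w` minimizes
`ℓ(η) = ⟨ξ, η⟩ + (1/(2μ))‖η‖_F² + g(X + η)` over `{η : Qη = Qw}`. -/
theorem stmt_12 (n q : ℕ) (hq : 1 ≤ q) (hnq : q ≤ n)
    (v : Fin n → ℝ) (hv : ∀ i, 0 < v i)
    (X : Matrix (Fin n) (Fin q) ℝ)
    (hX : Xᵀ * X = 1 ∧ ∃ c : Fin q → ℝ, X *ᵥ c = v)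
    (Xp : Matrix (Fin n) (Fin (n - q)) ℝ)
    (hO : (fromCols X Xp)ᵀ * fromCols X Xp = 1)
    (Nset : Set (Matrix (Fin n) (Fin q) ℝ))
    (hN : Nset = {U | ∃ (S : Matrix (Fin q) (Fin q) ℝ) (u : Fin (n - q) → ℝ),
      Sᵀ = S ∧ U = X * S + vecMulVec (Xp *ᵥ u) (v ᵥ* X)})
    (g : Matrix (Fin n) (Fin q) ℝ → ℝ) (hg : ConvexOn ℝ Set.univ g)
    (ξ : Matrix (Fin n) (Fin q) ℝ) (μ : ℝ) (hμ : 0 < μ)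
    (Q : Matrix (Fin n) (Fin q) ℝ →ₗ[ℝ] Matrix (Fin n) (Fin q) ℝ)
    (hQmem : ∀ z, Q z ∈ Nset)
    (hQid : ∀ z ∈ Nset, Q z = z)
    (hQorth : ∀ z, ∀ u ∈ Nset, Matrix.trace ((z - Q z)ᵀ * u) = 0)
    (n₀ : Matrix (Fin n) (Fin q) ℝ) (hn₀ : n₀ ∈ Nset)
    (p : Matrix (Fin n) (Fin q) ℝ)
    (hp : ∀ u : Matrix (Fin n) (Fin q) ℝ,
      (1 / 2 : ℝ) * Matrix.trace ((p - (X - μ • (ξ - n₀)))ᵀ * (p - (X - μ • (ξ - n₀)))) +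
          μ * g p ≤
        (1 / 2 : ℝ) * Matrix.trace ((u - (X - μ • (ξ - n₀)))ᵀ * (u - (X - μ • (ξ - n₀)))) +
          μ * g u)
    (w : Matrix (Fin n) (Fin q) ℝ) (hw : w = p - X)
    (l : Matrix (Fin n) (Fin q) ℝ → ℝ)
    (hl : l = fun η => Matrix.trace (ξᵀ * η) +
      (1 / (2 * μ)) * Matrix.trace (ηᵀ * η) + g (X + η)) :
    ∀ η : Matrix (Fin n) (Fin q) ℝ, Q η = Q w → l w ≤ l η :=
  stmt_12_general n q X Nset g ξ μ hμ Q hQorth n₀ hn₀ p hp w hw l hl
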